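/- arXiv:2110.06834 — 5 statements merged into one kernel-verified Lean document; each statement's English description precedes it below -/
import Mathlib

section
/- If for all covariate values x and treatment levels a, a' the ratio of counterfactual means satisfies 1-τ ≤ E[Y^a | X=x, A=a', Z=1] / E[Y^a | X=x, A=a, Z=1] ≤ 1/(1-τ), then the conditional treatment effect ψ(x) = μ₁(x) - μ₀(x) satisfies ψ(x) ≤ ψ̄(x) + (τ/(1-τ))·μ̄₁(x,1)·P(A=0|X=x,Z=1) + τ·μ̄₀(x,0)·P(A=1|X=x,Z=1), where ψ̄(x) = μ̄₁(x,1) - μ̄₀(x,0). -/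
/-! The sensitivity bounds compare each counterfactual mean on the unobserved arm with the
observed one: `μ̄₁(x,0) ≤ μ̄₁(x,1)/(1-τ)` and `μ̄₀(x,1) ≥ (1-τ) μ̄₀(x,0)`. Substituting these into
the iterated-expectation decompositions of `μ₁(x)` and `μ₀(x)` and writing
`1/(1-τ) = 1 + τ/(1-τ)` gives the bound. The lower bound `1 - τ ≤ μ̄ₐ(x,a)/μ̄ₐ(x,a)` also forces the
observed-arm means to be positive (a zero denominator would make the ratio `0`), so the ratios
can be cleared. -/

lemma pos_of_le_div_of_nonneg {a b c : ℝ} (hb : 0 ≤ b) (hc : 0 < c) (h : c ≤ a / b) : 0 < b := by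
  rcases hb.lt_or_eq with hb | rfl
  · exact hb
  · rw [div_zero] at h
    exact absurd h (not_le.2 hc)

lemma le_div_of_div_le_one_div {a b d : ℝ} (hb : 0 < b) (hd : 0 < d) (h : a / b ≤ 1 / d) :
    a ≤ b / d := by
  rw [le_div_iff₀ hd]
  simpa using (div_le_div_iff₀ hb hd).1 h

lemma mixture_sub_mixture_le {τ b₁₁ b₁₀ b₀₁ b₀₀ p₁ p₀ : ℝ} (hτ : τ < 1)
    (hp₁ : 0 ≤ p₁) (hp₀ : 0 ≤ p₀) (hp : p₁ + p₀ = 1)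
    (h₁ : b₁₀ ≤ b₁₁ / (1 - τ)) (h₀ : (1 - τ) * b₀₀ ≤ b₀₁) :
    (b₁₁ * p₁ + b₁₀ * p₀) - (b₀₁ * p₁ + b₀₀ * p₀)
      ≤ (b₁₁ - b₀₀) + τ / (1 - τ) * b₁₁ * p₀ + τ * b₀₀ * p₁ := by
  have hτ' : 1 - τ ≠ 0 := by linarith
  have hsplit : b₁₁ / (1 - τ) = b₁₁ + τ / (1 - τ) * b₁₁ := by
    field_simp
    ring
  have h₁p := mul_le_mul_of_nonneg_right (hsplit ▸ h₁) hp₀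
  have h₀p := mul_le_mul_of_nonneg_right h₀ hp₁
  calc (b₁₁ * p₁ + b₁₀ * p₀) - (b₀₁ * p₁ + b₀₀ * p₀)
      ≤ (b₁₁ * p₁ + (b₁₁ + τ / (1 - τ) * b₁₁) * p₀) - ((1 - τ) * b₀₀ * p₁ + b₀₀ * p₀) := by
        linarith
    _ = b₁₁ * (p₁ + p₀) - b₀₀ * (p₁ + p₀) + τ / (1 - τ) * b₁₁ * p₀ + τ * b₀₀ * p₁ := by ring
    _ = (b₁₁ - b₀₀) + τ / (1 - τ) * b₁₁ * p₀ + τ * b₀₀ * p₁ := by rw [hp]; ring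

theorem stmt0_general {X : Type*} (τ : ℝ) (hτ1 : τ < 1)
    (μbar : Bool → X → Bool → ℝ) (μ : Bool → X → ℝ) (p : X → Bool → ℝ)
    (hp_nonneg : ∀ x a, 0 ≤ p x a) (hp_sum : ∀ x, p x true + p x false = 1)
    (hμbar_nonneg : ∀ (a : Bool) (x : X), 0 ≤ μbar a x a)
    (hLIE : ∀ (a : Bool) (x : X),
      μ a x = μbar a x true * p x true + μbar a x false * p x false)
    (hsens : ∀ (x : X) (a a' : Bool),
      1 - τ ≤ μbar a x a' / μbar a x a ∧ μbar a x a' / μbar a x a ≤ 1 / (1 - τ))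
    (x : X) :
    μ true x - μ false x ≤ (μbar true x true - μbar false x false)
      + (τ / (1 - τ)) * μbar true x true * p x false
      + τ * μbar false x false * p x true := by
  have hτ : 0 < 1 - τ := by linarith
  have hpos : ∀ a, 0 < μbar a x a := fun a =>
    pos_of_le_div_of_nonneg (hμbar_nonneg a x) hτ (hsens x a a).1
  have h₁ : μbar true x false ≤ μbar true x true / (1 - τ) :=
    le_div_of_div_le_one_div (hpos true) hτ (hsens x true false).2
  have h₀ : (1 - τ) * μbar false x false ≤ μbar false x true :=
    (le_div_iff₀ (hpos false)).1 (hsens x false true).1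
  rw [hLIE, hLIE]
  exact mixture_sub_mixture_le hτ1 (hp_nonneg x true) (hp_nonneg x false) (hp_sum x) h₁ h₀

/-- Sensitivity-analysis upper bound on the conditional treatment effect
ψ(x) = μ₁(x) − μ₀(x), where μ̄ a x a' = E[Y^a | X=x, A=a', Z=1],
μ a x = E[Y^a | X=x, Z=1] (decomposed by iterated expectation), and
p x a = P(A=a | X=x, Z=1). -/
theorem stmt0 {X : Type*} (τ : ℝ) (hτ0 : 0 ≤ τ) (hτ1 : τ < 1)
    (μbar : Bool → X → Bool → ℝ) (μ : Bool → X → ℝ) (p : X → Bool → ℝ)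
    (hp_nonneg : ∀ x a, 0 ≤ p x a) (hp_sum : ∀ x, p x true + p x false = 1)
    (hμbar_nonneg : ∀ (a : Bool) (x : X), 0 ≤ μbar a x a)
    (hLIE : ∀ (a : Bool) (x : X),
      μ a x = μbar a x true * p x true + μbar a x false * p x false)
    (hsens : ∀ (x : X) (a a' : Bool),
      1 - τ ≤ μbar a x a' / μbar a x a ∧ μbar a x a' / μbar a x a ≤ 1 / (1 - τ))
    (x : X) :
    μ true x - μ false x ≤ (μbar true x true - μbar false x false)
      + (τ / (1 - τ)) * μbar true x true * p x false
      + τ * μbar false x false * p x true :=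
  stmt0_general τ hτ1 μbar μ p hp_nonneg hp_sum hμbar_nonneg hLIE hsens x
end

section
/- Under the same sensitivity assumption 1-τ ≤ μ̄_a(x,a')/μ̄_a(x,a) ≤ 1/(1-τ) for all (x,a,a'), the conditional treatment effect satisfies the lower bound ψ(x) ≥ ψ̄(x) - τ·μ̄₁(x,1)·P(A=0|X=x,Z=1) - (τ/(1-τ))·μ̄₀(x,0)·P(A=1|X=x,Z=1). -/
/-!
Rewrite ψ(x) through the law of iterated expectations. The sensitivity bounds give
μ̄₁(x,0) ≥ (1-τ)·μ̄₁(x,1) and μ̄₀(x,1) ≤ μ̄₀(x,0)/(1-τ); substituting the worse value for each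
unobserved counterfactual mean and using P(A=1|x,Z=1) + P(A=0|x,Z=1) = 1 gives the bound.
-/

/-- With the convention `r / 0 = 0`, a positive lower bound on `r / m` forces `m ≠ 0`. -/
lemma pos_of_le_div_of_nonneg_s1 {K : Type*} [GroupWithZero K] [LinearOrder K] {c r m : K}
    (hc : 0 < c) (hm : 0 ≤ m) (h : c ≤ r / m) : 0 < m := by
  refine hm.lt_of_ne fun hm0 => ?_
  rw [← hm0, div_zero] at h
  exact absurd h (not_le.2 hc)

section RatioBounds

variable {K : Type*} [Field K] [LinearOrder K] [IsStrictOrderedRing K]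

lemma le_div_of_div_le_one_div_s1 {c r m : K} (hc : 0 < c) (hm : 0 < m) (h : r / m ≤ 1 / c) :
    r ≤ m / c := by
  rw [div_le_div_iff₀ hm hc, one_mul] at h
  rwa [le_div_iff₀ hc]

lemma sub_ge_of_sensitivity_bounds {τ m₁₁ m₁₀ m₀₁ m₀₀ p₁ p₀ : K} (hτ : τ < 1)
    (hp₁ : 0 ≤ p₁) (hp₀ : 0 ≤ p₀) (hp : p₁ + p₀ = 1)
    (h₁ : (1 - τ) * m₁₁ ≤ m₁₀) (h₀ : m₀₁ ≤ m₀₀ / (1 - τ)) :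
    (m₁₁ * p₁ + m₁₀ * p₀) - (m₀₁ * p₁ + m₀₀ * p₀) ≥
      (m₁₁ - m₀₀) - τ * m₁₁ * p₀ - τ / (1 - τ) * m₀₀ * p₁ := by
  have hτ' : 1 - τ ≠ 0 := (sub_pos.2 hτ).ne'
  have h_div : m₀₀ / (1 - τ) = m₀₀ + τ / (1 - τ) * m₀₀ := by
    field_simp
    ring
  have h₁' := mul_le_mul_of_nonneg_right h₁ hp₀
  have h₀' := mul_le_mul_of_nonneg_right h₀ hp₁
  rw [h_div] at h₀'
  calc (m₁₁ - m₀₀) - τ * m₁₁ * p₀ - τ / (1 - τ) * m₀₀ * p₁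
      = m₁₁ * p₁ + (1 - τ) * m₁₁ * p₀ - ((m₀₀ + τ / (1 - τ) * m₀₀) * p₁ + m₀₀ * p₀) := by
        linear_combination (m₀₀ - m₁₁) * hp
    _ ≤ (m₁₁ * p₁ + m₁₀ * p₀) - (m₀₁ * p₁ + m₀₀ * p₀) := by linarith

end RatioBounds

theorem stmt1_general {X : Type*} (τ : ℝ) (hτ1 : τ < 1)
    (μbar : Bool → X → Bool → ℝ) (μ : Bool → X → ℝ) (p : X → Bool → ℝ)
    (hp_nonneg : ∀ x a, 0 ≤ p x a) (hp_sum : ∀ x, p x true + p x false = 1)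
    (hμbar_nonneg : ∀ (a : Bool) (x : X), 0 ≤ μbar a x a)
    (hLIE : ∀ (a : Bool) (x : X),
      μ a x = μbar a x true * p x true + μbar a x false * p x false)
    (hsens : ∀ (x : X) (a a' : Bool),
      1 - τ ≤ μbar a x a' / μbar a x a ∧ μbar a x a' / μbar a x a ≤ 1 / (1 - τ))
    (x : X) :
    μ true x - μ false x ≥ (μbar true x true - μbar false x false)
      - τ * μbar true x true * p x false
      - (τ / (1 - τ)) * μbar false x false * p x true := by
  have hτ' : 0 < 1 - τ := sub_pos.2 hτ1
  have hpos : ∀ a, 0 < μbar a x a := fun a =>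
    pos_of_le_div_of_nonneg_s1 hτ' (hμbar_nonneg a x) (hsens x a (!a)).1
  have h₁ : (1 - τ) * μbar true x true ≤ μbar true x false :=
    (le_div_iff₀ (hpos true)).1 (hsens x true false).1
  have h₀ : μbar false x true ≤ μbar false x false / (1 - τ) :=
    le_div_of_div_le_one_div_s1 hτ' (hpos false) (hsens x false true).2
  rw [hLIE true x, hLIE false x]
  exact sub_ge_of_sensitivity_bounds hτ1 (hp_nonneg x true) (hp_nonneg x false) (hp_sum x) h₁ h₀

/-- Sensitivity-analysis lower bound on the conditional treatment effect
ψ(x) = μ₁(x) − μ₀(x), same setup as the upper bound. -/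
theorem stmt1 {X : Type*} (τ : ℝ) (hτ0 : 0 ≤ τ) (hτ1 : τ < 1)
    (μbar : Bool → X → Bool → ℝ) (μ : Bool → X → ℝ) (p : X → Bool → ℝ)
    (hp_nonneg : ∀ x a, 0 ≤ p x a) (hp_sum : ∀ x, p x true + p x false = 1)
    (hμbar_nonneg : ∀ (a : Bool) (x : X), 0 ≤ μbar a x a)
    (hLIE : ∀ (a : Bool) (x : X),
      μ a x = μbar a x true * p x true + μbar a x false * p x false)
    (hsens : ∀ (x : X) (a a' : Bool),
      1 - τ ≤ μbar a x a' / μbar a x a ∧ μbar a x a' / μbar a x a ≤ 1 / (1 - τ))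
    (x : X) :
    μ true x - μ false x ≥ (μbar true x true - μbar false x false)
      - τ * μbar true x true * p x false
      - (τ / (1 - τ)) * μbar false x false * p x true :=
  stmt1_general τ hτ1 μbar μ p hp_nonneg hp_sum hμbar_nonneg hLIE hsens x
end

section
/- Assume: (i) E[Y^a | X, Z=1, A=a'] = E[Y^a | X, V=1, A=a'] for all a, a' (random sample selection); (ii) E[Y^a | X, V=1, A=a'] = E[Y^a | X, V=1, A=a] (no unmeasured confounding); and (iii) A=a implies Y = Y^a (consistency). Then E[Y^a | X, Z=1] = E[Y | X, A=a, Z=1]. -/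
open MeasureTheory ProbabilityTheory

/-!
Random sample selection followed by no unmeasured confounding makes every stratum mean
`E[Y^a | Z, A = a']` equal to the single number `E[Y^a | V, A = a]`; since the weights
`P(A = a' | Z)` sum to one, the law of iterated expectations collapses `E[Y^a | Z]` to the
stratum `A = a`, where consistency replaces `Y^a` by `Y`.

The event `{A = a}` need not be measurable, so the last step needs that it is null-measurable
for `P[|Z]`; this follows from its probability and that of its complement adding up to one.
-/

section NullMeasurable

variable {Ω : Type*} [MeasurableSpace Ω]

theorem nullMeasurableSet_of_measure_add_measure_compl_le {μ : Measure Ω} [IsFiniteMeasure μ]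
    {s : Set Ω} (h : μ s + μ sᶜ ≤ μ Set.univ) : NullMeasurableSet s μ := by
  set u := toMeasurable μ s
  set v := toMeasurable μ sᶜ
  have huv : u ∪ v = Set.univ :=
    Set.eq_univ_of_forall fun ω ↦ (em (ω ∈ s)).imp (subset_toMeasurable μ s ·)
      (subset_toMeasurable μ sᶜ ·)
  have hnull : μ (u ∩ v) = 0 := by
    have hadd := measure_union_add_inter (μ := μ) u (measurableSet_toMeasurable μ sᶜ)
    rw [huv, measure_toMeasurable, measure_toMeasurable] at hadd
    refine nonpos_iff_eq_zero.mp (ENNReal.le_of_add_le_add_left (measure_ne_top μ Set.univ) ?_)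
    rwa [hadd, add_zero]
  have hsub : u \ s ⊆ u ∩ v := fun ω hω ↦ ⟨hω.1, subset_toMeasurable μ sᶜ hω.2⟩
  refine (measurableSet_toMeasurable μ s).nullMeasurableSet.congr ?_
  exact ae_eq_set.mpr ⟨measure_mono_null hsub hnull,
    by simp [Set.sdiff_eq_empty.mpr (subset_toMeasurable μ s)]⟩

theorem nullMeasurableSet_restrict_of_cond_add_cond_compl_eq_one {P : Measure Ω}
    [IsFiniteMeasure P] {Z t : Set Ω} (h : P[|Z] t + P[|Z] tᶜ = 1) :
    NullMeasurableSet t (P.restrict Z) := by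
  have hZ : P Z ≠ 0 := fun hZ ↦ by simp [cond_eq_zero_of_meas_eq_zero hZ] at h
  have := cond_isProbabilityMeasure (μ := P) hZ
  have ht : NullMeasurableSet t P[|Z] :=
    nullMeasurableSet_of_measure_add_measure_compl_le (by rw [measure_univ, h])
  rwa [ProbabilityTheory.cond,
    nullMeasurableSet_smul_measure_iff (ENNReal.inv_ne_zero.mpr (measure_ne_top P Z))] at ht

theorem ae_cond_inter_mem {P : Measure Ω} {Z t : Set Ω}
    (ht : NullMeasurableSet t (P.restrict Z)) : ∀ᵐ ω ∂P[|Z ∩ t], ω ∈ t := by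
  have hmem := ae_restrict_mem₀ ht
  rw [Measure.restrict_restrict₀ ht, Set.inter_comm] at hmem
  exact Measure.ae_smul_measure hmem _

end NullMeasurable

theorem stmt3_general {Ω : Type*} [MeasurableSpace Ω]
    (P : Measure Ω) [IsProbabilityMeasure P]
    (Y : Ω → ℝ) (Ypot : Bool → Ω → ℝ) (A : Ω → Bool)
    (Zs Vs : Set Ω) (pA : Bool → ℝ)
    (hpA : ∀ a' : Bool, pA a' = ((P[|Zs]) {ω | A ω = a'}).toReal)
    (hsum : pA true + pA false = 1)
    -- law of iterated expectations over A
    (hLIE : ∀ a : Bool,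
      ∫ ω, Ypot a ω ∂(P[|Zs]) =
        pA true * ∫ ω, Ypot a ω ∂(P[|Zs ∩ {ω | A ω = true}])
          + pA false * ∫ ω, Ypot a ω ∂(P[|Zs ∩ {ω | A ω = false}]))
    -- (i) random sample selection
    (hRSS : ∀ a a' : Bool,
      ∫ ω, Ypot a ω ∂(P[|Zs ∩ {ω | A ω = a'}]) =
        ∫ ω, Ypot a ω ∂(P[|Vs ∩ {ω | A ω = a'}]))
    -- (ii) no unmeasured confounding
    (hNUC : ∀ a a' : Bool,
      ∫ ω, Ypot a ω ∂(P[|Vs ∩ {ω | A ω = a'}]) =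
        ∫ ω, Ypot a ω ∂(P[|Vs ∩ {ω | A ω = a}]))
    -- (iii) consistency
    (hcons : ∀ (a : Bool) (ω : Ω), A ω = a → Y ω = Ypot a ω)
    (a : Bool) :
    ∫ ω, Ypot a ω ∂(P[|Zs]) = ∫ ω, Y ω ∂(P[|Zs ∩ {ω | A ω = a}]) := by
  have hstratum : ∀ a', ∫ ω, Ypot a ω ∂(P[|Zs ∩ {ω | A ω = a'}]) =
      ∫ ω, Ypot a ω ∂(P[|Vs ∩ {ω | A ω = a}]) := fun a' ↦ by rw [hRSS, hNUC]
  have hcollapse :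
      ∫ ω, Ypot a ω ∂(P[|Zs]) = ∫ ω, Ypot a ω ∂(P[|Zs ∩ {ω | A ω = a}]) := by
    rw [hLIE, hstratum, hstratum, hstratum, ← add_mul, hsum, one_mul]
  have hsplit : P[|Zs] {ω | A ω = a} + P[|Zs] {ω | A ω = a}ᶜ = 1 := by
    have hcompl : {ω | A ω = a}ᶜ = {ω | A ω = !a} := by ext; cases a <;> simp
    rw [← ENNReal.toReal_eq_one_iff, ENNReal.toReal_add (measure_ne_top _ _)
      (measure_ne_top _ _), hcompl, ← hpA, ← hpA]
    cases a <;> simp only [Bool.not_true, Bool.not_false] <;> linarith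
  have hmem := ae_cond_inter_mem (nullMeasurableSet_restrict_of_cond_add_cond_compl_eq_one hsplit)
  rw [hcollapse]
  exact integral_congr_ae (hmem.mono fun ω hω ↦ (hcons a ω hω).symm)

/-- Identification of mean potential outcomes: under random sample selection,
no unmeasured confounding, and consistency (all conditional on a fixed
covariate value), E[Y^a | Z=1] = E[Y | A=a, Z=1]. Conditional expectations are
integrals with respect to the conditional measure P[|s]. -/
theorem stmt3 {Ω : Type*} [MeasurableSpace Ω]
    (P : Measure Ω) [IsProbabilityMeasure P]
    (Y : Ω → ℝ) (Ypot : Bool → Ω → ℝ) (A : Ω → Bool)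
    (Zs Vs : Set Ω) (pA : Bool → ℝ)
    (hpA : ∀ a' : Bool, pA a' = ((P[|Zs]) {ω | A ω = a'}).toReal)
    (hpos : ∀ a' : Bool, 0 < pA a')
    (hsum : pA true + pA false = 1)
    -- law of iterated expectations over A
    (hLIE : ∀ a : Bool,
      ∫ ω, Ypot a ω ∂(P[|Zs]) =
        pA true * ∫ ω, Ypot a ω ∂(P[|Zs ∩ {ω | A ω = true}])
          + pA false * ∫ ω, Ypot a ω ∂(P[|Zs ∩ {ω | A ω = false}]))
    -- (i) random sample selection
    (hRSS : ∀ a a' : Bool,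
      ∫ ω, Ypot a ω ∂(P[|Zs ∩ {ω | A ω = a'}]) =
        ∫ ω, Ypot a ω ∂(P[|Vs ∩ {ω | A ω = a'}]))
    -- (ii) no unmeasured confounding
    (hNUC : ∀ a a' : Bool,
      ∫ ω, Ypot a ω ∂(P[|Vs ∩ {ω | A ω = a'}]) =
        ∫ ω, Ypot a ω ∂(P[|Vs ∩ {ω | A ω = a}]))
    -- (iii) consistency
    (hcons : ∀ (a : Bool) (ω : Ω), A ω = a → Y ω = Ypot a ω)
    (a : Bool) :
    ∫ ω, Ypot a ω ∂(P[|Zs]) = ∫ ω, Y ω ∂(P[|Zs ∩ {ω | A ω = a}]) :=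
  stmt3_general P Y Ypot A Zs Vs pA hpA hsum hLIE hRSS hNUC hcons a
end

section
/- The total effect decomposes exactly into four interventional effects: ψ = ψ_{IDE,1} + ψ_{M₁,0} + ψ_{M₂,0} + ψ_{Cov,0}, where ψ_{Cov,0} is defined as the remainder; moreover, if M₁ and M₂ are conditionally independent given (X, A, Z=1) under both treatment levels, then the covariant effect satisfies ψ_{Cov,0} = Σ_{m₁,m₂} E[Y^{1 m₁ m₂}|X,Z=1]·(P(M₁¹=m₁,M₂¹=m₂|X,Z=1) − P(M₁¹=m₁|X,Z=1)P(M₂¹=m₂|X,Z=1)) − E[Y^{0 m₁ m₂}|X,Z=1]·(P(M₁⁰=m₁,M₂⁰=m₂|X,Z=1) − P(M₁⁰=m₁|X,Z=1)P(M₂⁰=m₂|X,Z=1)) averaged over the sample, which equals zero. -/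
/-! Since the empirical mean is linear, `ψ_Cov` is the mean of the pointwise remainder
`∑ ν⁰ ((π¹ - q¹ r¹) - (π⁰ - q⁰ r⁰))`, where `π` is the joint law of the mediators and `q`, `r` are
the marginals appearing in `ψ_M₁`, `ψ_M₂`. When the joint law factorises every bracket vanishes,
and so does the stated covariance expression. -/

open Finset

noncomputable def empiricalMean {ι X : Type*} [Fintype ι] (xs : ι → X) : (X → ℝ) →ₗ[ℝ] ℝ where
  toFun f := (∑ i, f (xs i)) / Fintype.card ι
  map_add' f g := by simp only [Pi.add_apply, sum_add_distrib, add_div]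
  map_smul' c f := by
    simp only [Pi.smul_apply, smul_eq_mul, ← mul_sum, mul_div_assoc, RingHom.id_apply]

theorem sum_total_sub_interventional_eq {M₁ M₂ : Type*} [Fintype M₁] [Fintype M₂]
    (ν₀ ν₁ π₀ π₁ : M₁ → M₂ → ℝ) (q₀ q₁ : M₁ → ℝ) (r₀ r₁ : M₂ → ℝ) :
    ∑ m₁, ∑ m₂, (ν₁ m₁ m₂ * π₁ m₁ m₂ - ν₀ m₁ m₂ * π₀ m₁ m₂)
      - ∑ m₁, ∑ m₂, (ν₁ m₁ m₂ - ν₀ m₁ m₂) * π₁ m₁ m₂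
      - ∑ m₁, ∑ m₂, ν₀ m₁ m₂ * (q₁ m₁ - q₀ m₁) * r₀ m₂
      - ∑ m₁, ∑ m₂, ν₀ m₁ m₂ * (r₁ m₂ - r₀ m₂) * q₁ m₁
    = ∑ m₁, ∑ m₂, ν₀ m₁ m₂ * ((π₁ m₁ m₂ - q₁ m₁ * r₁ m₂) - (π₀ m₁ m₂ - q₀ m₁ * r₀ m₂)) := by
  simp only [← sum_sub_distrib]
  refine sum_congr rfl fun m₁ _ => sum_congr rfl fun m₂ _ => ?_
  ring

theorem stmt6_general {X ι M1t M2t : Type*} [Fintype ι]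
    [Fintype M1t] [Fintype M2t]
    (xs : ι → X)
    (ν : Bool → M1t → M2t → X → ℝ) (pj : Bool → M1t → M2t → X → ℝ)
    (p1 : Bool → M1t → X → ℝ) (p2 : Bool → M2t → X → ℝ)
    (Pn : (X → ℝ) → ℝ)
    (hPn : ∀ f, Pn f = (∑ i, f (xs i)) / (Fintype.card ι))
    (ψ ψIDE ψM1 ψM2 ψCov : ℝ)
    (hψ : ψ = Pn (fun x => ∑ m1 : M1t, ∑ m2 : M2t,
      (ν true m1 m2 x * pj true m1 m2 x - ν false m1 m2 x * pj false m1 m2 x)))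
    (hIDE : ψIDE = Pn (fun x => ∑ m1 : M1t, ∑ m2 : M2t,
      (ν true m1 m2 x - ν false m1 m2 x) * pj true m1 m2 x))
    (hM1 : ψM1 = Pn (fun x => ∑ m1 : M1t, ∑ m2 : M2t,
      ν false m1 m2 x * (p1 true m1 x - p1 false m1 x) * p2 false m2 x))
    (hM2 : ψM2 = Pn (fun x => ∑ m1 : M1t, ∑ m2 : M2t,
      ν false m1 m2 x * (p2 true m2 x - p2 false m2 x) * p1 true m1 x))
    (hCov : ψCov = ψ - ψIDE - ψM1 - ψM2) :
    ψ = ψIDE + ψM1 + ψM2 + ψCov ∧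
    ((∀ (a : Bool) (m1 : M1t) (m2 : M2t) (x : X),
        pj a m1 m2 x = p1 a m1 x * p2 a m2 x) →
      ψCov = Pn (fun x => ∑ m1 : M1t, ∑ m2 : M2t,
        (ν true m1 m2 x * (pj true m1 m2 x - p1 true m1 x * p2 true m2 x)
          - ν false m1 m2 x * (pj false m1 m2 x - p1 false m1 x * p2 false m2 x)))
        ∧ ψCov = 0) := by
  refine ⟨by linarith, fun hindep => ?_⟩
  obtain rfl : Pn = empiricalMean xs := funext hPn
  have hCov_zero : ψCov = 0 := by
    rw [hCov, hψ, hIDE, hM1, hM2, ← map_sub, ← map_sub, ← map_sub, ← map_zero (empiricalMean xs)]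
    congr 1
    funext x
    simp only [Pi.sub_apply, sum_total_sub_interventional_eq, hindep, sub_self, mul_zero,
      sum_const_zero, Pi.zero_apply]
  refine ⟨?_, hCov_zero⟩
  rw [hCov_zero, ← map_zero (empiricalMean xs)]
  congr 1
  funext x
  simp [hindep]

/-- Vansteelandt–Daniel interventional effect decomposition: the total effect
ψ decomposes exactly as ψ = ψ_{IDE,1} + ψ_{M₁,0} + ψ_{M₂,0} + ψ_{Cov,0}
(with ψ_{Cov,0} the remainder); moreover, if the mediators are conditionally
independent under both treatment levels, the covariant effect equals the
stated covariance-type expression, which is zero. -/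
theorem stmt6 {X ι M1t M2t : Type*} [Fintype ι] [Nonempty ι]
    [Fintype M1t] [Fintype M2t]
    (xs : ι → X)
    (ν : Bool → M1t → M2t → X → ℝ) (pj : Bool → M1t → M2t → X → ℝ)
    (p1 : Bool → M1t → X → ℝ) (p2 : Bool → M2t → X → ℝ)
    (hp1 : ∀ (a : Bool) (m1 : M1t) (x : X), p1 a m1 x = ∑ m2 : M2t, pj a m1 m2 x)
    (hp2 : ∀ (a : Bool) (m2 : M2t) (x : X), p2 a m2 x = ∑ m1 : M1t, pj a m1 m2 x)
    (Pn : (X → ℝ) → ℝ)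
    (hPn : ∀ f, Pn f = (∑ i, f (xs i)) / (Fintype.card ι))
    (ψ ψIDE ψM1 ψM2 ψCov : ℝ)
    (hψ : ψ = Pn (fun x => ∑ m1 : M1t, ∑ m2 : M2t,
      (ν true m1 m2 x * pj true m1 m2 x - ν false m1 m2 x * pj false m1 m2 x)))
    (hIDE : ψIDE = Pn (fun x => ∑ m1 : M1t, ∑ m2 : M2t,
      (ν true m1 m2 x - ν false m1 m2 x) * pj true m1 m2 x))
    (hM1 : ψM1 = Pn (fun x => ∑ m1 : M1t, ∑ m2 : M2t,
      ν false m1 m2 x * (p1 true m1 x - p1 false m1 x) * p2 false m2 x))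
    (hM2 : ψM2 = Pn (fun x => ∑ m1 : M1t, ∑ m2 : M2t,
      ν false m1 m2 x * (p2 true m2 x - p2 false m2 x) * p1 true m1 x))
    (hCov : ψCov = ψ - ψIDE - ψM1 - ψM2) :
    ψ = ψIDE + ψM1 + ψM2 + ψCov ∧
    ((∀ (a : Bool) (m1 : M1t) (m2 : M2t) (x : X),
        pj a m1 m2 x = p1 a m1 x * p2 a m2 x) →
      ψCov = Pn (fun x => ∑ m1 : M1t, ∑ m2 : M2t,
        (ν true m1 m2 x * (pj true m1 m2 x - p1 true m1 x * p2 true m2 x)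
          - ν false m1 m2 x * (pj false m1 m2 x - p1 false m1 x * p2 false m2 x)))
        ∧ ψCov = 0) :=
  stmt6_general xs ν pj p1 p2 Pn hPn ψ ψIDE ψM1 ψM2 ψCov hψ hIDE hM1 hM2 hCov
end

section
/- Under the relaxed sensitivity model 1−τ ≤ E[Y^a | X=x, V=1, Q_a=a'] / E[Y^a | X=x, V=1, Q_a=a] ≤ 1/(1−τ) for all (x,a,a') with Q_a = 1(A=a)RS, and without any random-sample-selection assumption, the population contrast satisfies: ψ̃(x) − τ·μ̃₁(x,1) − (τ/(1−τ))·μ̃₀(x,0) ≤ E[Y¹−Y⁰|X=x,V=1] ≤ ψ̃(x) + (τ/(1−τ))·μ̃₁(x,1) + τ·μ̃₀(x,0), where μ̃_a(x,a') = E[Y^a|X=x,V=1,Q_a=a'] and ψ̃(x) = μ̃₁(x,1) − μ̃₀(x,0). -/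
/-!
In each arm, write `pop = T q + F (1 - q) = T + (F - T)(1 - q)` with `T` the observed and `F`
the unobserved conditional mean. The sensitivity model traps `F` in `[(1 - τ) T, T / (1 - τ)]`,
so `F - T ∈ [-τ T, τ/(1-τ) T]`; this interval contains `0` and `1 - q ∈ [0, 1]`, so the unknown
selection probability can only shrink the deviation. Subtracting the two arms gives the bounds.
-/

lemma pos_of_le_div_self {c T : ℝ} (hc : 0 < c) (hT : 0 ≤ T) (h : c ≤ T / T) : 0 < T := by
  refine hT.lt_of_ne fun hT0 => ?_
  rw [← hT0, div_zero] at h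
  linarith

lemma mul_le_and_le_div_of_ratio_bounds {c T F : ℝ} (hT : 0 < T)
    (h : c ≤ F / T ∧ F / T ≤ 1 / c) : c * T ≤ F ∧ F ≤ T / c := by
  obtain ⟨hlo, hhi⟩ := h
  rw [le_div_iff₀ hT] at hlo
  rw [div_le_iff₀ hT, one_div_mul_eq_div] at hhi
  exact ⟨hlo, hhi⟩

lemma mixture_bounds_of_sub_bounds {T F q L U : ℝ} (hq : 0 ≤ q ∧ q ≤ 1)
    (hL : L ≤ 0) (hU : 0 ≤ U) (hF : L ≤ F - T ∧ F - T ≤ U) :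
    T + L ≤ T * q + F * (1 - q) ∧ T * q + F * (1 - q) ≤ T + U := by
  have hmix : T * q + F * (1 - q) = T + (F - T) * (1 - q) := by ring
  obtain ⟨hq0, hq1⟩ := hq
  rw [hmix]
  constructor <;> nlinarith [hF.1, hF.2]

lemma mixture_bounds_of_sensitivity {τ T F q : ℝ} (hτ0 : 0 ≤ τ) (hτ1 : τ < 1) (hT : 0 ≤ T)
    (hq : 0 ≤ q ∧ q ≤ 1) (hTT : 1 - τ ≤ T / T)
    (hFT : 1 - τ ≤ F / T ∧ F / T ≤ 1 / (1 - τ)) :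
    T - τ * T ≤ T * q + F * (1 - q) ∧
      T * q + F * (1 - q) ≤ T + τ / (1 - τ) * T := by
  have hc : 0 < 1 - τ := sub_pos.mpr hτ1
  obtain ⟨hlo, hhi⟩ :=
    mul_le_and_le_div_of_ratio_bounds (pos_of_le_div_self hc hT hTT) hFT
  have hUpper : τ / (1 - τ) * T = T / (1 - τ) - T := by field_simp; ring
  have hsub := mixture_bounds_of_sub_bounds (T := T) (F := F) (L := -(τ * T))
    (U := τ / (1 - τ) * T) hq (neg_nonpos.mpr (mul_nonneg hτ0 hT)) (by positivity)
    ⟨by linarith, by linarith⟩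
  exact ⟨by linarith [hsub.1], hsub.2⟩

/-- Here `b = true` encodes `Q_a = 1`, and `q a x` is the unknown `P(Q_a = 1 | X = x, V = 1)`. -/
theorem stmt11 {X : Type*} (τ : ℝ) (hτ0 : 0 ≤ τ) (hτ1 : τ < 1)
    (μt : Bool → X → Bool → ℝ) (pop : Bool → X → ℝ) (q : Bool → X → ℝ)
    (hrange : ∀ (a : Bool) (x : X) (b : Bool), 0 ≤ μt a x b ∧ μt a x b ≤ 1)
    (hq : ∀ (a : Bool) (x : X), 0 ≤ q a x ∧ q a x ≤ 1)
    (hLTE : ∀ (a : Bool) (x : X),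
      pop a x = μt a x true * q a x + μt a x false * (1 - q a x))
    (hsens : ∀ (a : Bool) (x : X) (b : Bool),
      1 - τ ≤ μt a x b / μt a x true ∧ μt a x b / μt a x true ≤ 1 / (1 - τ))
    (x : X) :
    (μt true x true - μt false x true) - τ * μt true x true
        - (τ / (1 - τ)) * μt false x true
      ≤ pop true x - pop false x ∧
    pop true x - pop false x
      ≤ (μt true x true - μt false x true) + (τ / (1 - τ)) * μt true x true
        + τ * μt false x true := by
  have hArm : ∀ a : Bool, μt a x true - τ * μt a x true ≤ pop a x ∧
      pop a x ≤ μt a x true + τ / (1 - τ) * μt a x true := fun a => by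
    rw [hLTE a x]
    exact mixture_bounds_of_sensitivity hτ0 hτ1 (hrange a x true).1 (hq a x)
      (hsens a x true).1 (hsens a x false)
  obtain ⟨hlo₁, hhi₁⟩ := hArm true
  obtain ⟨hlo₀, hhi₀⟩ := hArm false
  exact ⟨by linarith, by linarith⟩
end
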